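/- Let R be a finite commutative chain ring with maximal ideal ⟨γ⟩, nilpotency index s, and residue field of size q, and set M = q/(q−1). For n ≥ 1 and a real number d ≥ 0, let B_R(n, d) = max{|C| : C ⊆ R^n a linear code with d_Hom(C) ≥ d}, where by convention d_Hom({0}) = M·(n+1), and for δ ≥ 0 define β_R(δ) = limsup_{n→∞} (1/n)·log_{|R|}(B_R(n, δn)). Then for every δ with 0 ≤ δ ≤ 1, β_R(δ) ≤ 1 − δ; in particular β_R(1) = 0. -/

import Mathlib

/-! On each coordinate of a linear code the homogeneous weight averages at most 1: a nonempty
fibre of the coordinate map is a coset of its kernel, so each of the at most `q - 1` nonzero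
elements of the socle `⟨γ^(s-1)⟩` (weight `q/(q-1)`) is taken at most as often as `0`.
Double counting the total weight gives Plotkin's inequality `(|D| - 1) d ≤ |J| |D|` for a code
`D` supported on a set `J` of coordinates. If `C ⊆ R^n` has minimum distance at least `m`, its
subcode vanishing outside `m - 1` chosen coordinates therefore has at most `m` words, while the
quotient embeds into the remaining `n - m + 1` coordinates; so `|C| ≤ m |R|^(n-m+1)`, and
`(1/n) log_{|R|} B_R(n, δn) ≤ 1 - δ + O(log n / n)`. -/

open scoped BigOperators Classical

/-- The normalized homogeneous weight on a finite chain ring with maximal ideal `⟨γ⟩`,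
nilpotency index `s` and residue field of size `q`. -/
noncomputable def wtHom {R : Type*} [CommRing R] (γ : R) (s q : ℕ) (x : R) : ℚ :=
  if x = 0 then 0
  else if x ∈ Ideal.span {γ ^ (s - 1)} then (q : ℚ) / ((q : ℚ) - 1)
  else 1

/-- Homogeneous weight of a vector: the sum of the weights of its coordinates. -/
noncomputable def wtHomV {R : Type*} [CommRing R] (γ : R) (s q : ℕ) {n : ℕ}
    (v : Fin n → R) : ℚ :=
  ∑ i, wtHom γ s q (v i)

/-- Hamming weight of a vector: the number of nonzero coordinates. -/
noncomputable def hWt {R : Type*} [Zero R] {n : ℕ} (v : Fin n → R) : ℕ :=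
  Nat.card {i : Fin n // v i ≠ 0}

/-- `K` is the rank of the code `C`: the least cardinality of a generating set of `C`
as an `R`-module. -/
def IsCodeRank {R : Type*} [CommRing R] {n : ℕ} (C : Submodule R (Fin n → R)) (K : ℕ) : Prop :=
  IsLeast {k : ℕ | ∃ S : Finset (Fin n → R),
    S.card = k ∧ Submodule.span R (S : Set (Fin n → R)) = C} K

/-- The socle of a code: the codewords all of whose coordinates lie in `⟨γ^(s-1)⟩`. -/
def socleCode {R : Type*} [CommRing R] (γ : R) (s : ℕ) {n : ℕ}
    (C : Submodule R (Fin n → R)) : Submodule R (Fin n → R) :=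
  C ⊓ Submodule.pi Set.univ (fun _ : Fin n => Ideal.span {γ ^ (s - 1)})

/-- `BmaxHom γ s q n d` is the largest cardinality of a linear code `C ⊆ R^n` whose
minimum homogeneous distance is at least `d`. -/
noncomputable def BmaxHom {R : Type*} [CommRing R] [Fintype R] (γ : R) (s q : ℕ)
    (n : ℕ) (d : ℝ) : ℕ :=
  sSup {N : ℕ | ∃ C : Submodule R (Fin n → R),
    (∀ c ∈ C, c ≠ 0 → d ≤ ((wtHomV γ s q c : ℚ) : ℝ)) ∧ Nat.card C = N}

open Finset

theorem card_span_singleton_le_card_quotient {R : Type*} [CommRing R] [Fintype R] {γ a : R}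
    (h : γ * a = 0) : Nat.card (Ideal.span {a}) ≤ Nat.card (R ⧸ Ideal.span {γ}) := by
  let f := LinearMap.toSpanSingleton R R a
  have hker : Ideal.span {γ} ≤ LinearMap.ker f := by
    rwa [Ideal.span_singleton_le_iff_mem, LinearMap.mem_ker]
  have hrange : LinearMap.range ((Ideal.span {γ}).liftQ f hker) = Ideal.span {a} := by
    rw [Submodule.range_liftQ, ← LinearMap.span_singleton_eq_range]
  rw [← hrange]
  exact Nat.card_le_card_of_surjective _ (LinearMap.surjective_rangeRestrict _)

theorem AddMonoidHom.card_fiber_le_card_ker {G H : Type*} [AddGroup G] [AddGroup H] [Fintype G]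
    [DecidableEq H] (φ : G →+ H) (y : H) : #{g | φ g = y} ≤ #{g | φ g = 0} := by
  rcases (univ.filter fun g => φ g = y).eq_empty_or_nonempty with h | ⟨g₀, hg₀⟩
  · simp [h]
  · refine card_le_card_of_injOn (· - g₀) (fun g hg => ?_) fun _ _ _ _ => sub_left_inj.mp
    simp_all

theorem AddMonoidHom.card_filter_mem_le {G H : Type*} [AddGroup G] [AddGroup H] [Fintype G]
    [DecidableEq H] (φ : G →+ H) (T : Finset H) : #{g | φ g ∈ T} ≤ #T * #{g | φ g = 0} := by
  rw [card_eq_sum_card_fiberwise (s := univ.filter fun g => φ g ∈ T) (t := T)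
    fun g hg => (mem_filter.mp hg).2]
  refine sum_le_card_nsmul _ _ _ fun y _ => ?_
  rw [filter_filter]
  refine le_trans (card_le_card fun g hg => ?_) (φ.card_fiber_le_card_ker y)
  simp_all

section

variable {R : Type*} [CommRing R] {γ : R} {s q : ℕ}

@[simp]
theorem wtHom_zero : wtHom γ s q 0 = 0 := by simp [wtHom]

theorem sum_wtHom_le_card [Fintype R] {G : Type*} [AddCommGroup G] [Fintype G] (φ : G →+ R)
    (hS : Nat.card (Ideal.span {γ ^ (s - 1)}) ≤ q) :
    ∑ g, wtHom γ s q (φ g) ≤ Fintype.card G := by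
  set k := #{g | φ g = 0}
  set a := #{g | φ g ≠ 0 ∧ φ g ∈ Ideal.span {γ ^ (s - 1)}}
  set b := #{g | φ g ≠ 0 ∧ φ g ∉ Ideal.span {γ ^ (s - 1)}}
  have hsum : ∑ g, wtHom γ s q (φ g) = q / (q - 1) * a + b := by
    simp only [wtHom]
    rw [sum_ite, sum_const_zero, zero_add, sum_ite]
    simp [filter_filter, a, b, mul_comm]
  have hcard : Fintype.card G = k + a + b := by
    rw [← card_univ, ← card_filter_add_card_filter_not (fun g => φ g = 0),
      ← card_filter_add_card_filter_not (s := univ.filter fun g => ¬φ g = 0)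
        (fun g => φ g ∈ Ideal.span {γ ^ (s - 1)})]
    simp [filter_filter, k, a, b, add_assoc]
  have ha : a ≤ (q - 1) * k := by
    let T := (univ.filter (· ∈ Ideal.span {γ ^ (s - 1)})).erase 0
    have hT : #T ≤ q - 1 := by
      rw [card_erase_of_mem (by simp), ← Fintype.card_subtype, ← Nat.card_eq_fintype_card]
      omega
    calc a = #{g | φ g ∈ T} := by simp [a, T]
      _ ≤ #T * k := φ.card_filter_mem_le T
      _ ≤ (q - 1) * k := Nat.mul_le_mul_right k hT
  have key : (q / (q - 1) : ℚ) * a ≤ k + a := by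
    rcases Nat.lt_or_ge q 2 with hq | hq
    -- for `q ≤ 1` the junk value of `q / (q - 1)` is harmless: `ha` forces `a = 0`
    · simp [show a = 0 by simpa [Nat.sub_eq_zero_of_le (Nat.le_of_lt_succ hq)] using ha]
    have hq' : (1 : ℚ) < q := by exact_mod_cast hq
    have ha' : (a : ℚ) ≤ (q - 1) * k := by
      rw [← Nat.cast_pred (by omega)]; exact_mod_cast ha
    rw [div_mul_eq_mul_div, div_le_iff₀ (by linarith)]
    nlinarith
  rw [hsum, hcard]
  push_cast
  linarith

@[simp]
theorem wtHomV_zero {n : ℕ} : wtHomV γ s q (0 : Fin n → R) = 0 := by simp [wtHomV]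

theorem plotkin_bound [Fintype R] (hS : Nat.card (Ideal.span {γ ^ (s - 1)}) ≤ q) {n : ℕ}
    {D : Submodule R (Fin n → R)} {J : Finset (Fin n)} (hsupp : ∀ c ∈ D, ∀ i ∉ J, c i = 0)
    {d : ℚ} (hwt : ∀ c ∈ D, c ≠ 0 → d ≤ wtHomV γ s q c) :
    (Nat.card D - 1) * d ≤ #J * Nat.card D := by
  calc (Nat.card D - 1 : ℚ) * d = #(univ.erase (0 : D)) • d := by
        rw [card_erase_of_mem (mem_univ _), card_univ, ← Nat.card_eq_fintype_card,
          nsmul_eq_mul, Nat.cast_pred Nat.card_pos]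
    _ ≤ ∑ c ∈ univ.erase (0 : D), wtHomV γ s q (c : Fin n → R) :=
        card_nsmul_le_sum _ _ _ fun c hc => hwt _ c.2 (by simpa using ne_of_mem_erase hc)
    _ = ∑ c : D, wtHomV γ s q (c : Fin n → R) := by
        rw [← add_sum_erase univ _ (mem_univ 0), ZeroMemClass.coe_zero, wtHomV_zero, zero_add]
    _ = ∑ i ∈ J, ∑ c : D, wtHom γ s q ((c : Fin n → R) i) := by
        simp only [wtHomV]
        rw [sum_comm]
        refine (sum_subset (subset_univ J) fun i _ hi => sum_eq_zero fun c _ => ?_).symm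
        rw [hsupp _ c.2 i hi, wtHom_zero]
    _ ≤ #J * Nat.card D := by
        rw [← nsmul_eq_mul, Nat.card_eq_fintype_card]
        exact sum_le_card_nsmul _ _ _ fun i _ =>
          sum_wtHom_le_card ((LinearMap.proj i).comp D.subtype).toAddMonoidHom hS

theorem card_le_of_card_add_one_le_wtHomV [Fintype R]
    (hS : Nat.card (Ideal.span {γ ^ (s - 1)}) ≤ q) {n : ℕ} {C : Submodule R (Fin n → R)}
    (J : Finset (Fin n)) (hwt : ∀ c ∈ C, c ≠ 0 → (#J + 1 : ℚ) ≤ wtHomV γ s q c) :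
    Nat.card C ≤ (#J + 1) * Fintype.card R ^ (n - #J) := by
  let ψ : C →ₗ[R] ({i // i ∉ J} → R) := (LinearMap.funLeft R R Subtype.val).comp C.subtype
  let D := (LinearMap.ker ψ).map C.subtype
  have hD : Nat.card D ≤ #J + 1 := by
    have hsupp : ∀ c ∈ D, ∀ i ∉ J, c i = 0 := by
      rintro _ ⟨c, hc, rfl⟩ i hi
      exact congrFun hc ⟨i, hi⟩
    have hplotkin := plotkin_bound hS hsupp fun c hc => by
      obtain ⟨c, -, rfl⟩ := hc
      exact hwt _ c.2
    have : (Nat.card D : ℚ) ≤ #J + 1 := by nlinarith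
    exact_mod_cast this
  have hrange : Nat.card (LinearMap.range ψ) ≤ Fintype.card R ^ (n - #J) := by
    calc Nat.card (LinearMap.range ψ) ≤ Nat.card ({i // i ∉ J} → R) :=
          Nat.card_le_card_of_injective _ Subtype.val_injective
      _ = Fintype.card R ^ (n - #J) := by simp
  calc Nat.card C = Nat.card (LinearMap.ker ψ) * Nat.card (C ⧸ LinearMap.ker ψ) :=
        Submodule.card_eq_card_quotient_mul_card _
    _ = Nat.card D * Nat.card (LinearMap.range ψ) := by
        rw [Nat.card_congr (Submodule.equivMapOfInjective _ C.injective_subtype _).toEquiv,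
          Nat.card_congr ψ.quotKerEquivRange.toEquiv]
    _ ≤ (#J + 1) * Fintype.card R ^ (n - #J) := Nat.mul_le_mul hD hrange

theorem card_submodule_le_pow [Fintype R] {n : ℕ} (C : Submodule R (Fin n → R)) :
    Nat.card C ≤ Fintype.card R ^ n :=
  calc Nat.card C ≤ Nat.card (Fin n → R) := Nat.card_le_card_of_injective _ Subtype.val_injective
    _ = Fintype.card R ^ n := by simp

theorem bot_mem_setOf_BmaxHom (n : ℕ) (d : ℝ) :
    1 ∈ {N : ℕ | ∃ C : Submodule R (Fin n → R),
      (∀ c ∈ C, c ≠ 0 → d ≤ ((wtHomV γ s q c : ℚ) : ℝ)) ∧ Nat.card C = N} :=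
  ⟨⊥, fun _ hc hc0 => (hc0 ((Submodule.mem_bot R).mp hc)).elim, Nat.card_unique⟩

theorem one_le_BmaxHom [Fintype R] (n : ℕ) (d : ℝ) : 1 ≤ BmaxHom γ s q n d :=
  le_csSup ⟨Fintype.card R ^ n, by rintro _ ⟨C, -, rfl⟩; exact card_submodule_le_pow C⟩
    (bot_mem_setOf_BmaxHom n d)

theorem BmaxHom_le [Fintype R] (hS : Nat.card (Ideal.span {γ ^ (s - 1)}) ≤ q) {n : ℕ} {d : ℝ}
    (hd : d ≤ n) : BmaxHom γ s q n d ≤ (n + 1) * Fintype.card R ^ (n + 1 - ⌊d⌋₊) := by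
  refine csSup_le ⟨1, bot_mem_setOf_BmaxHom n d⟩ ?_
  rintro _ ⟨C, hC, rfl⟩
  have hm : ⌊d⌋₊ ≤ n := Nat.floor_le_of_le hd
  rcases Nat.eq_zero_or_pos ⌊d⌋₊ with hm0 | hm0
  · calc Nat.card C ≤ Fintype.card R ^ n := card_submodule_le_pow C
      _ ≤ (n + 1) * Fintype.card R ^ (n + 1 - ⌊d⌋₊) := by
        rw [hm0]
        exact le_mul_of_one_le_of_le (by omega) (Nat.pow_le_pow_right Fintype.card_pos (by omega))
  obtain ⟨J, -, hJ⟩ := exists_subset_card_eq (s := (univ : Finset (Fin n))) (n := ⌊d⌋₊ - 1)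
    (by simpa using Nat.sub_le_of_le_add (by omega))
  have hwt : ∀ c ∈ C, c ≠ 0 → (#J + 1 : ℚ) ≤ wtHomV γ s q c := by
    intro c hc hc0
    have : ((#J + 1 : ℕ) : ℝ) ≤ d := by
      rw [show #J + 1 = ⌊d⌋₊ by omega]
      exact Nat.floor_le (zero_le_one.trans (Nat.floor_pos.mp hm0))
    exact_mod_cast this.trans (hC c hc hc0)
  calc Nat.card C ≤ (#J + 1) * Fintype.card R ^ (n - #J) :=
        card_le_of_card_add_one_le_wtHomV hS J hwt
    _ ≤ (n + 1) * Fintype.card R ^ (n + 1 - ⌊d⌋₊) := by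
        rw [hJ, show n - (⌊d⌋₊ - 1) = n + 1 - ⌊d⌋₊ by omega]
        exact Nat.mul_le_mul_right _ (by omega)

end

open Filter Topology

theorem tendsto_add_two_add_logb_succ_div (b c : ℝ) :
    Tendsto (fun n : ℕ => c + (2 + Real.logb b (n + 1)) / n) atTop (𝓝 c) := by
  have hlog : Tendsto (fun n : ℕ => Real.logb b (n + 1) / n) atTop (𝓝 0) := by
    have := (Real.tendsto_pow_logb_div_mul_add_atTop (b := b) 1 (-1) 1 one_ne_zero).comp
      (tendsto_atTop_add_const_right _ 1 tendsto_natCast_atTop_atTop)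
    simpa [Function.comp_def] using this
  simpa [add_div] using
    tendsto_const_nhds.add ((tendsto_const_div_atTop_nhds_zero_nat 2).add hlog)

/-- `limsup (rateHom γ s q δ) atTop` is the paper's `β_R(δ)`. -/
noncomputable def rateHom {R : Type*} [CommRing R] [Fintype R] (γ : R) (s q : ℕ) (δ : ℝ)
    (n : ℕ) : ℝ :=
  1 / (n : ℝ) * Real.logb (Fintype.card R : ℝ) (BmaxHom γ s q n (δ * n))

section

variable {R : Type*} [CommRing R] [Fintype R] [Nontrivial R] {γ : R} {s q : ℕ}

theorem rateHom_nonneg (δ : ℝ) (n : ℕ) : 0 ≤ rateHom γ s q δ n :=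
  mul_nonneg (by positivity) (Real.logb_nonneg (by exact_mod_cast Fintype.one_lt_card)
    (by exact_mod_cast one_le_BmaxHom n _))

theorem rateHom_le (hS : Nat.card (Ideal.span {γ ^ (s - 1)}) ≤ q) {δ : ℝ} (hδ : δ ≤ 1)
    {n : ℕ} (hn : 0 < n) :
    rateHom γ s q δ n ≤ 1 - δ + (2 + Real.logb (Fintype.card R) (n + 1)) / n := by
  have hQ : 1 < (Fintype.card R : ℝ) := by exact_mod_cast Fintype.one_lt_card
  set Q : ℝ := (Fintype.card R : ℝ)
  set m := ⌊δ * n⌋₊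
  have hdn : δ * n ≤ n := by nlinarith [(Nat.cast_pos.mpr hn : (0 : ℝ) < n)]
  have hlog : Real.logb Q (BmaxHom γ s q n (δ * n)) ≤ Real.logb Q (n + 1) + (n + 1 - m : ℕ) :=
    calc Real.logb Q (BmaxHom γ s q n (δ * n))
        ≤ Real.logb Q ((n + 1) * Fintype.card R ^ (n + 1 - m) : ℕ) :=
          Real.logb_le_logb_of_le hQ (by exact_mod_cast one_le_BmaxHom n _)
            (by exact_mod_cast BmaxHom_le hS hdn)
      _ = Real.logb Q (n + 1) + (n + 1 - m : ℕ) := by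
          push_cast
          rw [Real.logb_mul (by positivity) (by positivity), Real.logb_pow,
            Real.logb_self_eq_one hQ, mul_one]
  have hm : ((n + 1 - m : ℕ) : ℝ) ≤ n + 2 - δ * n := by
    rw [Nat.cast_sub (by have := Nat.floor_le_of_le hdn; omega)]
    push_cast
    linarith [Nat.lt_floor_add_one (δ * n)]
  calc rateHom γ s q δ n = Real.logb Q (BmaxHom γ s q n (δ * n)) / n := one_div_mul_eq_div _ _
    _ ≤ (Real.logb Q (n + 1) + (n + 2 - δ * n)) / n := by gcongr; linarith
    _ = 1 - δ + (2 + Real.logb Q (n + 1)) / n := by field_simp; ring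

theorem rateHom_eventuallyLE (hS : Nat.card (Ideal.span {γ ^ (s - 1)}) ≤ q) {δ : ℝ}
    (hδ : δ ≤ 1) :
    rateHom γ s q δ ≤ᶠ[atTop] fun n => 1 - δ + (2 + Real.logb (Fintype.card R) (n + 1)) / n :=
  eventually_atTop.2 ⟨1, fun _ hn => rateHom_le hS hδ hn⟩

theorem limsup_rateHom_le (hS : Nat.card (Ideal.span {γ ^ (s - 1)}) ≤ q) {δ : ℝ}
    (hδ : δ ≤ 1) : limsup (rateHom γ s q δ) atTop ≤ 1 - δ := by
  have hmaj := tendsto_add_two_add_logb_succ_div (Fintype.card R) (1 - δ)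
  exact (limsup_le_limsup (rateHom_eventuallyLE hS hδ)
    (isCoboundedUnder_le_of_le atTop (rateHom_nonneg δ)) hmaj.isBoundedUnder_le).trans
    hmaj.limsup_eq.le

theorem isBoundedUnder_le_rateHom (hS : Nat.card (Ideal.span {γ ^ (s - 1)}) ≤ q) {δ : ℝ}
    (hδ : δ ≤ 1) : IsBoundedUnder (· ≤ ·) atTop (rateHom γ s q δ) :=
  (tendsto_add_two_add_logb_succ_div _ (1 - δ)).isBoundedUnder_le.mono_le
    (rateHom_eventuallyLE hS hδ)

end

theorem asymptotic_plotkin_bound_general {R : Type*} [CommRing R] [IsLocalRing R] [Fintype R]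
    (γ : R) (s q : ℕ) (hs : 1 ≤ s)
    (hmax : IsLocalRing.maximalIdeal R = Ideal.span {γ})
    (hnil : γ ^ s = 0)
    (hq : Nat.card (R ⧸ IsLocalRing.maximalIdeal R) = q) :
    (∀ δ : ℝ, 0 ≤ δ → δ ≤ 1 →
      Filter.limsup (fun n : ℕ => (1 / (n : ℝ)) *
          Real.logb (Fintype.card R) (BmaxHom γ s q n (δ * n))) Filter.atTop
        ≤ 1 - δ) ∧
    Filter.limsup (fun n : ℕ => (1 / (n : ℝ)) *
        Real.logb (Fintype.card R) (BmaxHom γ s q n ((1 : ℝ) * n))) Filter.atTop = 0 := by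
  have hS : Nat.card (Ideal.span {γ ^ (s - 1)}) ≤ q := by
    rw [← hq, hmax]
    exact card_span_singleton_le_card_quotient ((mul_pow_sub_one (by omega) γ).trans hnil)
  refine ⟨fun δ _ hδ => limsup_rateHom_le hS hδ,
    le_antisymm ((limsup_rateHom_le hS le_rfl).trans_eq (sub_self 1)) ?_⟩
  exact le_limsup_of_frequently_le (Frequently.of_forall (rateHom_nonneg 1))
    (isBoundedUnder_le_rateHom hS le_rfl)

/-- Asymptotic Plotkin bound in the homogeneous metric: `β_R(δ) ≤ 1 - δ` for
`0 ≤ δ ≤ 1`; in particular `β_R(1) = 0`. -/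
theorem asymptotic_plotkin_bound {R : Type*} [CommRing R] [IsLocalRing R] [Fintype R]
    (γ : R) (s q : ℕ) (hs : 1 ≤ s)
    (hmax : IsLocalRing.maximalIdeal R = Ideal.span {γ})
    (hnil : γ ^ s = 0) (hnil' : γ ^ (s - 1) ≠ 0)
    (hq : Nat.card (R ⧸ IsLocalRing.maximalIdeal R) = q) :
    (∀ δ : ℝ, 0 ≤ δ → δ ≤ 1 →
      Filter.limsup (fun n : ℕ => (1 / (n : ℝ)) *
          Real.logb (Fintype.card R) (BmaxHom γ s q n (δ * n))) Filter.atTop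
        ≤ 1 - δ) ∧
    Filter.limsup (fun n : ℕ => (1 / (n : ℝ)) *
        Real.logb (Fintype.card R) (BmaxHom γ s q n ((1 : ℝ) * n))) Filter.atTop = 0 :=
  asymptotic_plotkin_bound_general γ s q hs hmax hnil hq
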